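/- If G is a connected graph on n vertices whose complement Ḡ is also connected, then W(G) + W(Ḡ) ≤ C(n,2) + (1/2)[(n−1)(ε(G) + ε(Ḡ)) − ξ^c(G) − ξ^c(Ḡ)]. -/

import Mathlib

open Finset

/-- The Wiener index: sum of distances over unordered pairs of vertices. -/
noncomputable def wiener {V : Type*} [Fintype V] (G : SimpleGraph V) : ℕ :=
  (∑ u : V, ∑ v : V, G.dist u v) / 2

/-- The eccentricity of a vertex. -/
noncomputable def eccVert {V : Type*} [Fintype V] (G : SimpleGraph V) (v : V) : ℕ :=
  univ.sup (G.dist v)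

/-- The eccentricity (total eccentricity) of a graph. -/
noncomputable def eccSum {V : Type*} [Fintype V] (G : SimpleGraph V) : ℕ :=
  ∑ v : V, eccVert G v

/-- The eccentric connectivity of a graph. -/
noncomputable def eccConn {V : Type*} [Fintype V] (G : SimpleGraph V)
    [DecidableRel G.Adj] : ℕ :=
  ∑ v : V, G.degree v * eccVert G v

/-! From a vertex `v`, its `deg v` neighbours lie at distance `1` and the other
`n - 1 - deg v` vertices at distance at most `ε(v)`. Summing over `v` gives
`2 W(G) + ξᶜ(G) ≤ 2 |E(G)| + (n - 1) ε(G)`, and `|E(G)| + |E(Ḡ)| = C(n, 2)`. -/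

namespace SimpleGraph

variable {V : Type*} [Fintype V] (G : SimpleGraph V)

theorem dist_le_eccVert (v u : V) : G.dist v u ≤ eccVert G v :=
  le_sup (mem_univ u)

theorem card_edgeFinset_add_card_edgeFinset_compl [DecidableEq V] [DecidableRel G.Adj] :
    #G.edgeFinset + #Gᶜ.edgeFinset = (Fintype.card V).choose 2 := by
  rw [← card_union_of_disjoint (by simpa using disjoint_compl_right), ← edgeFinset_sup,
    ← card_edgeFinset_top_eq_card_choose_two]
  congr 1
  ext e
  rw [mem_edgeFinset, mem_edgeFinset, sup_compl_eq_top]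

theorem two_mul_wiener_le : 2 * wiener G ≤ ∑ u, ∑ v, G.dist u v := by
  rw [wiener, mul_comm]
  exact Nat.div_mul_le_self _ 2

variable [DecidableEq V] [DecidableRel G.Adj]

theorem sum_dist_le (v : V) :
    ∑ u, G.dist v u ≤ G.degree v + (Fintype.card V - 1 - G.degree v) * eccVert G v := by
  have hv : v ∈ (G.neighborFinset v)ᶜ := by simp
  rw [← sum_add_sum_compl (G.neighborFinset v), ← sum_erase_add _ _ hv, dist_self, add_zero]
  gcongr
  · rw [← card_neighborFinset_eq_degree, card_eq_sum_ones]
    exact (sum_congr rfl fun u hu => dist_eq_one_iff_adj.mpr ((mem_neighborFinset ..).mp hu)).le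
  · refine (sum_le_card_nsmul _ _ _ fun u _ => G.dist_le_eccVert v u).trans_eq ?_
    rw [smul_eq_mul, card_erase_of_mem hv, card_compl, card_neighborFinset_eq_degree,
      Nat.sub_right_comm]

theorem two_mul_wiener_add_eccConn_le :
    2 * wiener G + eccConn G ≤ 2 * #G.edgeFinset + (Fintype.card V - 1) * eccSum G := by
  rw [← sum_degrees_eq_twice_card_edges, eccConn, eccSum, mul_sum, ← sum_add_distrib]
  refine (add_le_add_left G.two_mul_wiener_le _).trans ?_
  rw [← sum_add_distrib]
  refine sum_le_sum fun v _ => ?_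
  have hdeg : G.degree v ≤ Fintype.card V - 1 := by
    have := G.degree_lt_card_verts v; omega
  calc ∑ u, G.dist v u + G.degree v * eccVert G v
      ≤ G.degree v + (Fintype.card V - 1 - G.degree v) * eccVert G v
          + G.degree v * eccVert G v := by gcongr; exact G.sum_dist_le v
    _ = G.degree v + (Fintype.card V - 1) * eccVert G v := by
      rw [add_assoc, ← add_mul, Nat.sub_add_cancel hdeg]

end SimpleGraph

theorem stmt_8_general {V : Type*} [Fintype V] [DecidableEq V] (G : SimpleGraph V)
    [DecidableRel G.Adj] :
    (wiener G : ℚ) + wiener Gᶜ ≤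
      (Fintype.card V).choose 2 +
        (1 / 2) * ((Fintype.card V - 1) * (eccSum G + eccSum Gᶜ)
          - eccConn G - eccConn Gᶜ) := by
  rcases isEmpty_or_nonempty V with _ | _
  · simp [wiener, eccSum, eccConn]
  have hE : (#G.edgeFinset + #Gᶜ.edgeFinset : ℚ) = (Fintype.card V).choose 2 := by
    exact_mod_cast G.card_edgeFinset_add_card_edgeFinset_compl
  have hbound := add_le_add G.two_mul_wiener_add_eccConn_le Gᶜ.two_mul_wiener_add_eccConn_le
  rw [← Nat.cast_le (α := ℚ)] at hbound
  push_cast [Nat.cast_sub Fintype.card_pos] at hbound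
  linarith

theorem stmt_8 {V : Type*} [Fintype V] [DecidableEq V] (G : SimpleGraph V)
    [DecidableRel G.Adj] (hG : G.Connected) (hGc : Gᶜ.Connected) :
    (wiener G : ℚ) + wiener Gᶜ ≤
      (Fintype.card V).choose 2 +
        (1 / 2) * ((Fintype.card V - 1) * (eccSum G + eccSum Gᶜ)
          - eccConn G - eccConn Gᶜ) :=
  stmt_8_general G
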